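/- arXiv:1307.4281 — 2 statements merged into one kernel-verified Lean document; each statement's English description precedes it below -/
import Mathlib

section
/- Let A be an n×n matrix over ℍ with n ≥ 2. For every j ∈ {1,…,n}, cdet_j A = Σ_{i=1}^{n} L_{ij}·a_{ij}, where the left ij-th cofactor is L_{ij} = −cdet_i (A_{i.}(a_{j.}))^{jj} for i ≠ j (replace the i-th row of A by the j-th row of A, then delete the j-th row and the j-th column, and take the i-th column determinant with the column indexing inherited from A), and L_{jj} = cdet_k A^{jj}, where k = min({1,…,n}∖{j}) and A^{jj} is the submatrix of A obtained by deleting its j-th row and j-th column. -/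
open Quaternion Matrix Finset

noncomputable section

/-- Ordered product of the entries of `A` along the cycle of `σ` containing `x`,
starting at `x`:  `a_{x,σx} · a_{σx,σ²x} ⋯ a_{σ^{c-1}x,x}`. -/
def cycProd {n : ℕ} (A : Matrix (Fin n) (Fin n) ℍ[ℝ]) (σ : Equiv.Perm (Fin n))
    (x : Fin n) : ℍ[ℝ] :=
  ((List.range (Function.minimalPeriod (⇑σ) x)).map
    (fun t => A ((⇑σ)^[t] x) ((⇑σ)^[t + 1] x))).prod

/-- `x` is the smallest element of its `σ`-cycle. -/
def isLeaderB {n : ℕ} (σ : Equiv.Perm (Fin n)) (x : Fin n) : Bool :=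
  (List.range n).all fun t => decide (x ≤ (⇑σ)^[t] x)

/-- `x` lies in the `σ`-cycle of `i`. -/
def inCycleB {n : ℕ} (σ : Equiv.Perm (Fin n)) (i x : Fin n) : Bool :=
  (List.range n).any fun t => decide ((⇑σ)^[t] i = x)

/-- The increasing list of the smallest elements of the `σ`-cycles other than
the cycle of `i`. -/
def leaders {n : ℕ} (σ : Equiv.Perm (Fin n)) (i : Fin n) : List (Fin n) :=
  (List.finRange n).filter fun x => isLeaderB σ x && !(inCycleB σ i x)

/-- The `i`-th row determinant of a quaternion matrix: the sum over all
permutations, written in left-ordered cycle notation (the cycle of `i` first,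
starting with `i`; every other cycle starting with its smallest element, these
smallest elements increasing from left to right), of the sign times the ordered
product of the corresponding entries. -/
def rdet {n : ℕ} (A : Matrix (Fin n) (Fin n) ℍ[ℝ]) (i : Fin n) : ℍ[ℝ] :=
  ∑ σ : Equiv.Perm (Fin n),
    ((Equiv.Perm.sign σ : ℤ) : ℍ[ℝ]) *
      (cycProd A σ i * ((leaders σ i).map (cycProd A σ)).prod)

/-- The `j`-th column determinant of a quaternion matrix: the sum over all
permutations, written in right-ordered cycle notation (the cycle of `j` last,
ending with `j`; every other cycle ending with its smallest element, these
smallest elements increasing from right to left), of the sign times the ordered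
product of the corresponding entries. -/
def cdet {n : ℕ} (A : Matrix (Fin n) (Fin n) ℍ[ℝ]) (j : Fin n) : ℍ[ℝ] :=
  ∑ τ : Equiv.Perm (Fin n),
    ((Equiv.Perm.sign τ : ℤ) : ℍ[ℝ]) *
      ((((leaders τ j).reverse).map (cycProd A τ)).prod * cycProd A τ j)

/-- The determinant of a (Hermitian) quaternion matrix: the common value of all
row and column determinants. -/
def Hdet : {m : ℕ} → Matrix (Fin m) (Fin m) ℍ[ℝ] → ℍ[ℝ]
  | 0, _ => 1
  | _ + 1, A => rdet A 0

/-- The principal submatrix of `M` with rows and columns indexed by `β`. -/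
def principalSub {n : ℕ} (M : Matrix (Fin n) (Fin n) ℍ[ℝ]) (β : Finset (Fin n)) :
    Matrix (Fin β.card) (Fin β.card) ℍ[ℝ] :=
  M.submatrix (⇑(β.orderEmbOfFin rfl)) (⇑(β.orderEmbOfFin rfl))

/-- The position of `i` inside the increasing enumeration of the finset `β`. -/
def posIn {n : ℕ} (β : Finset (Fin n)) {i : Fin n} (h : i ∈ β) : Fin β.card :=
  (β.orderIsoOfFin rfl).symm ⟨i, h⟩

/-- `Σ_{β ∈ J_{s,n}{i}} cdet_i (M_β^β)`: the sum, over all subsets `β` of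
cardinality `s` containing `i`, of the column determinants of the principal
submatrix `M_β^β` taken at the position of `i` within `β`. -/
def cdetPM {n : ℕ} (M : Matrix (Fin n) (Fin n) ℍ[ℝ]) (s : ℕ) (i : Fin n) : ℍ[ℝ] :=
  ∑ β ∈ ((Finset.powersetCard s (Finset.univ : Finset (Fin n))).filter
      fun β => i ∈ β).attach,
    cdet (principalSub M β.1) (posIn β.1 (Finset.mem_filter.mp β.2).2)

/-- `Σ_{α ∈ I_{s,n}{j}} rdet_j (M_α^α)`: the sum, over all subsets `α` of
cardinality `s` containing `j`, of the row determinants of the principal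
submatrix `M_α^α` taken at the position of `j` within `α`. -/
def rdetPM {n : ℕ} (M : Matrix (Fin n) (Fin n) ℍ[ℝ]) (s : ℕ) (j : Fin n) : ℍ[ℝ] :=
  ∑ α ∈ ((Finset.powersetCard s (Finset.univ : Finset (Fin n))).filter
      fun α => j ∈ α).attach,
    rdet (principalSub M α.1) (posIn α.1 (Finset.mem_filter.mp α.2).2)

/-- The sum of all principal minors of `M` of order `r`. -/
def minorSum {n : ℕ} (M : Matrix (Fin n) (Fin n) ℍ[ℝ]) (r : ℕ) : ℍ[ℝ] :=
  ∑ β ∈ Finset.powersetCard r (Finset.univ : Finset (Fin n)),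
    Hdet (principalSub M β)

/-- The (column) rank of a quaternion matrix: the dimension of the span of its
columns as a right `ℍ`-vector space. -/
def qrank {m n : ℕ} (A : Matrix (Fin m) (Fin n) ℍ[ℝ]) : ℕ :=
  Module.finrank ℍ[ℝ]ᵐᵒᵖ
    (Submodule.span ℍ[ℝ]ᵐᵒᵖ (Set.range Aᵀ) : Submodule ℍ[ℝ]ᵐᵒᵖ (Fin m → ℍ[ℝ]))

/-- `Ind A = k`: `k` is the smallest nonnegative integer with
`rank A^(k+1) = rank A^k`. -/
def isInd {n : ℕ} (A : Matrix (Fin n) (Fin n) ℍ[ℝ]) (k : ℕ) : Prop :=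
  qrank (A ^ (k + 1)) = qrank (A ^ k) ∧
    ∀ l < k, qrank (A ^ (l + 1)) ≠ qrank (A ^ l)

/-- `X` is a Drazin inverse of `A` (relative to the index `k`). -/
def isDrazin {n : ℕ} (A X : Matrix (Fin n) (Fin n) ℍ[ℝ]) (k : ℕ) : Prop :=
  A ^ (k + 1) * X = A ^ k ∧ X * A * X = X ∧ A * X = X * A

end

/-!
Write `τ ∈ S_{n+2}` as `τ = σ̂ * swap j i`, where `i = τ⁻¹ j` and `σ̂` is a permutation `σ` of the
other `n + 1` indices, transported along `j.succAbove` and fixing `j`; `(i, σ)` runs over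
`Fin (n + 2) × S_{n+1}` exactly once. If `i = j`, then `j` is a fixed point of `τ` contributing the
last factor `a_{jj}`, and the other cycles are those of `σ`, the cycle of the least index `k` now
being an ordinary cycle led by `k`: these terms sum to `cdet_k A^{jj} · a_{jj}`. If `i ≠ j`, then
`j` sits in the `σ`-cycle of `i` right after `i`, so the `j`-cycle of `τ` reads
`a_{j,σi} ⋯ a_{·,i} · a_{ij}`: the `i`-cycle of `σ` computed in `A_{i.}(a_{j.})`, followed by
`a_{ij}`. The other cycles and their leaders are those of `σ`, and the sign flips; summing over `σ`
gives `L_{ij} · a_{ij}`.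
-/

open Equiv Function

theorem Equiv.Perm.minimalPeriod_pos {α : Type*} [Finite α] (σ : Perm α) (x : α) :
    0 < minimalPeriod σ x :=
  minimalPeriod_pos_of_mem_periodicPts (σ.injective.mem_periodicPts x)

section Cycles

variable {m : ℕ} (σ : Perm (Fin m))

theorem Equiv.Perm.mod_minimalPeriod_lt (x : Fin m) (t : ℕ) :
    t % minimalPeriod σ x < m :=
  (Nat.mod_lt _ (σ.minimalPeriod_pos x)).trans_le
    (minimalPeriod_le_card.trans_eq (Fintype.card_fin m))

theorem isLeaderB_iff {x : Fin m} : isLeaderB σ x ↔ ∀ t, x ≤ σ^[t] x := by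
  simp only [isLeaderB, List.all_eq_true, List.mem_range, decide_eq_true_eq]
  refine ⟨fun h t => ?_, fun h t _ => h t⟩
  rw [← iterate_mod_minimalPeriod_eq]
  exact h _ (σ.mod_minimalPeriod_lt x t)

theorem inCycleB_iff {i x : Fin m} : inCycleB σ i x ↔ ∃ t, σ^[t] i = x := by
  simp only [inCycleB, List.any_eq_true, List.mem_range, decide_eq_true_eq]
  refine ⟨fun ⟨t, _, h⟩ => ⟨t, h⟩, fun ⟨t, h⟩ => ?_⟩
  exact ⟨_, σ.mod_minimalPeriod_lt i t, by rwa [iterate_mod_minimalPeriod_eq]⟩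

theorem inCycleB_self (i : Fin m) : inCycleB σ i i :=
  (inCycleB_iff σ).2 ⟨0, rfl⟩

theorem inCycleB_symm {i x : Fin m} (h : inCycleB σ i x) : inCycleB σ x i := by
  obtain ⟨t, rfl⟩ := (inCycleB_iff σ).1 h
  refine (inCycleB_iff σ).2 ⟨minimalPeriod σ i * t - t, ?_⟩
  rw [← iterate_add_apply, Nat.sub_add_cancel (Nat.le_mul_of_pos_left t (σ.minimalPeriod_pos i))]
  exact (isPeriodicPt_minimalPeriod σ i).mul_const t

theorem iterate_ne_of_not_inCycleB {i y : Fin m} (h : ¬ inCycleB σ i y) (t : ℕ) :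
    σ^[t] y ≠ i :=
  fun ht => h (inCycleB_symm σ ((inCycleB_iff σ).2 ⟨t, ht⟩))

theorem inCycleB_iff_exists_lt_minimalPeriod {i x : Fin m} :
    inCycleB σ i x ↔ ∃ s < minimalPeriod σ i, σ^[s + 1] i = x := by
  rw [inCycleB_iff]
  refine ⟨fun ⟨t, ht⟩ => ?_, fun ⟨s, _, hs⟩ => ⟨s + 1, hs⟩⟩
  have hp := σ.minimalPeriod_pos i
  refine ⟨(t + minimalPeriod σ i - 1) % minimalPeriod σ i, Nat.mod_lt _ hp, ?_⟩
  rw [iterate_succ_apply', iterate_mod_minimalPeriod_eq, ← iterate_succ_apply' σ,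
    Nat.succ_eq_add_one, Nat.sub_add_cancel (by omega), iterate_add_minimalPeriod_eq, ht]

theorem not_inCycleB_of_mem_leaders {i x : Fin m} (hx : x ∈ leaders σ i) : ¬ inCycleB σ i x := by
  simp_all [leaders]

end Cycles

theorem leaders_zero_cons {m : ℕ} (σ : Perm (Fin (m + 1))) :
    0 :: leaders σ 0 = (List.finRange (m + 1)).filter (isLeaderB σ) := by
  have hlead : isLeaderB σ 0 := (isLeaderB_iff σ).2 fun _ => Fin.zero_le _
  simp only [leaders, List.finRange_succ, List.filter_cons, hlead, inCycleB_self, Bool.not_true,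
    Bool.and_false, Bool.false_eq_true, if_false, if_true, List.cons.injEq, true_and]
  refine List.filter_congr fun x hx => ?_
  obtain ⟨y, -, rfl⟩ := List.mem_map.1 hx
  cases hy : isLeaderB σ y.succ
  · rfl
  · have : ¬ inCycleB σ 0 y.succ := fun hc => by
      obtain ⟨t, ht⟩ := (inCycleB_iff σ).1 (inCycleB_symm σ hc)
      exact Fin.succ_ne_zero y (Fin.le_zero_iff.1 (ht ▸ (isLeaderB_iff σ).1 hy t))
    simp [this]

theorem filter_finRange_eq_map_succAbove {m : ℕ} (j : Fin (m + 1)) {p : Fin (m + 1) → Bool}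
    (hj : p j = false) :
    (List.finRange (m + 1)).filter p
      = ((List.finRange m).filter (p ∘ j.succAbove)).map j.succAbove := by
  refine List.Pairwise.eq_of_mem_iff (r := (· < ·))
    ((List.pairwise_lt_finRange _).sublist List.filter_sublist)
    (((List.pairwise_lt_finRange _).sublist List.filter_sublist).map _
      fun _ _ h => Fin.strictMono_succAbove j h) fun x => ?_
  simp only [List.mem_filter, List.mem_finRange, true_and, List.mem_map, Function.comp_apply]
  refine ⟨fun hx => ?_, fun ⟨y, hy, hyx⟩ => hyx ▸ hy⟩
  obtain ⟨y, rfl⟩ := Fin.exists_succAbove_eq (x := x) (y := j) fun h => by simp [h, hj] at hx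
  exact ⟨y, hx, rfl⟩

section Transport

variable {m M : ℕ} {τ : Perm (Fin M)} {σ : Perm (Fin m)} {f : Fin m → Fin M} {y : Fin m}

theorem iterate_apply_eq_of_orbit (h : ∀ t, τ (f (σ^[t] y)) = f (σ^[t + 1] y)) (t : ℕ) :
    τ^[t] (f y) = f (σ^[t] y) := by
  induction t with
  | zero => rfl
  | succ t ih => rw [iterate_succ_apply', ih, h]

theorem minimalPeriod_eq_of_iterate_apply (hf : Injective f)
    (h : ∀ t, τ^[t] (f y) = f (σ^[t] y)) : minimalPeriod τ (f y) = minimalPeriod σ y :=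
  minimalPeriod_eq_minimalPeriod_iff.2 fun t => by
    simp only [IsPeriodicPt, IsFixedPt, h, hf.eq_iff]

theorem isLeaderB_eq_of_iterate_apply (hf : StrictMono f)
    (h : ∀ t, τ^[t] (f y) = f (σ^[t] y)) : isLeaderB τ (f y) = isLeaderB σ y :=
  Bool.eq_iff_iff.2 <| by simp only [isLeaderB_iff, h, hf.le_iff_le]

theorem cycProd_eq_of_iterate_apply {A : Matrix (Fin M) (Fin M) ℍ[ℝ]}
    {B : Matrix (Fin m) (Fin m) ℍ[ℝ]} (hf : Injective f) (h : ∀ t, τ^[t] (f y) = f (σ^[t] y))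
    (hB : ∀ t, B (σ^[t] y) (σ^[t + 1] y) = A (f (σ^[t] y)) (f (σ^[t + 1] y))) :
    cycProd A τ (f y) = cycProd B σ y := by
  rw [cycProd, cycProd, minimalPeriod_eq_of_iterate_apply hf h]
  exact congrArg List.prod (List.map_congr_left fun t _ => by rw [h, h, hB])

end Transport

section Decomposition

variable {m : ℕ}

def permExtend (j : Fin (m + 1)) (σ : Perm (Fin m)) : Perm (Fin (m + 1)) :=
  σ.viaFintypeEmbedding (Fin.succAboveEmb j)

/-- For `i ≠ j`, `j` is inserted into the cycle of `permExtend j σ` through `i`, right after `i`. -/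
def permInsert (j i : Fin (m + 1)) (σ : Perm (Fin m)) : Perm (Fin (m + 1)) :=
  permExtend j σ * swap j i

variable (j : Fin (m + 1)) (σ : Perm (Fin m))

@[simp]
theorem permExtend_apply_succAbove (y : Fin m) :
    permExtend j σ (j.succAbove y) = j.succAbove (σ y) :=
  σ.viaFintypeEmbedding_apply_image _ y

@[simp]
theorem permExtend_apply_self : permExtend j σ j = j :=
  σ.viaFintypeEmbedding_apply_notMem_range _ fun ⟨y, hy⟩ => Fin.succAbove_ne j y hy

theorem sign_permExtend : Perm.sign (permExtend j σ) = Perm.sign σ :=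
  Perm.viaFintypeEmbedding_sign σ _

theorem permInsert_self : permInsert j j σ = permExtend j σ := by
  rw [permInsert, swap_self]
  exact mul_one _

theorem permInsert_apply_right (i : Fin (m + 1)) : permInsert j i σ i = j := by
  simp [permInsert]

theorem permInsert_bijective :
    Bijective fun p : Fin (m + 1) × Perm (Fin m) => permInsert j p.1 p.2 := by
  refine (Fintype.bijective_iff_injective_and_card _).2
    ⟨?_, by simp [Fintype.card_perm, Nat.factorial_succ]⟩
  rintro ⟨i₁, σ₁⟩ ⟨i₂, σ₂⟩ (h : permInsert j i₁ σ₁ = permInsert j i₂ σ₂)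
  obtain rfl : i₁ = i₂ := (permInsert j i₂ σ₂).injective <| by
    rw [permInsert_apply_right, ← h, permInsert_apply_right]
  have hext : permExtend j σ₁ = permExtend j σ₂ := mul_right_cancel h
  congr
  refine Equiv.ext fun y => Fin.succAbove_right_injective (p := j) ?_
  simpa using congrArg (fun ρ : Perm (Fin (m + 1)) => ρ (j.succAbove y)) hext

end Decomposition

noncomputable def cdetTerm {m : ℕ} (A : Matrix (Fin m) (Fin m) ℍ[ℝ]) (j : Fin m)
    (τ : Perm (Fin m)) : ℍ[ℝ] :=
  ((Perm.sign τ : ℤ) : ℍ[ℝ]) * ((((leaders τ j).reverse).map (cycProd A τ)).prod * cycProd A τ j)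

section Diagonal

variable {m : ℕ} (A : Matrix (Fin (m + 2)) (Fin (m + 2)) ℍ[ℝ]) (j : Fin (m + 2))
  (σ : Perm (Fin (m + 1)))

theorem iterate_permExtend_apply_succAbove (y : Fin (m + 1)) (t : ℕ) :
    (permExtend j σ)^[t] (j.succAbove y) = j.succAbove (σ^[t] y) :=
  iterate_apply_eq_of_orbit (fun _ => by rw [iterate_succ_apply', permExtend_apply_succAbove]) t

theorem leaders_permExtend :
    leaders (permExtend j σ) j = (0 :: leaders σ 0).map j.succAbove := by
  have hj : ∀ y, ¬ inCycleB (permExtend j σ) j (j.succAbove y) := fun y h => by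
    obtain ⟨t, ht⟩ := (inCycleB_iff _).1 h
    exact Fin.succAbove_ne j y (ht ▸ iterate_fixed (permExtend_apply_self j σ) t)
  rw [leaders_zero_cons, leaders, filter_finRange_eq_map_succAbove j (by simp [inCycleB_self])]
  congr 2
  funext y
  simp [hj, isLeaderB_eq_of_iterate_apply (Fin.strictMono_succAbove j)
    (iterate_permExtend_apply_succAbove j σ y)]

theorem cycProd_permExtend_self : cycProd A (permExtend j σ) j = A j j := by
  simp [cycProd, minimalPeriod_eq_one_iff_isFixedPt.2 (permExtend_apply_self j σ)]

theorem cdetTerm_permExtend :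
    cdetTerm A j (permExtend j σ) = cdetTerm (A.submatrix j.succAbove j.succAbove) 0 σ * A j j := by
  have hcyc : ∀ y, cycProd A (permExtend j σ) (j.succAbove y)
      = cycProd (A.submatrix j.succAbove j.succAbove) σ y := fun y =>
    cycProd_eq_of_iterate_apply Fin.succAbove_right_injective
      (iterate_permExtend_apply_succAbove j σ y) fun _ => rfl
  simp only [cdetTerm, leaders_permExtend, sign_permExtend, cycProd_permExtend_self, List.map_cons,
    ← List.map_reverse, List.map_map, List.reverse_cons, List.map_append, List.prod_append]
  simp [Function.comp_def, hcyc, mul_assoc]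

end Diagonal

section OffDiagonal

variable {m : ℕ} (A : Matrix (Fin (m + 1)) (Fin (m + 1)) ℍ[ℝ]) (j : Fin (m + 1)) (i' : Fin m)
  (σ : Perm (Fin m))

theorem permInsert_apply_left : permInsert j (j.succAbove i') σ j = j.succAbove (σ i') := by
  simp [permInsert]

theorem permInsert_apply_succAbove_of_ne {y : Fin m} (hy : y ≠ i') :
    permInsert j (j.succAbove i') σ (j.succAbove y) = j.succAbove (σ y) := by
  rw [permInsert, Perm.mul_apply, swap_apply_of_ne_of_ne (Fin.succAbove_ne j y)
    (Fin.succAbove_right_injective.ne hy), permExtend_apply_succAbove]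

theorem iterate_permInsert_apply_succAbove {y : Fin m} (hy : ¬ inCycleB σ i' y) (t : ℕ) :
    (permInsert j (j.succAbove i') σ)^[t] (j.succAbove y) = j.succAbove (σ^[t] y) :=
  iterate_apply_eq_of_orbit (fun t => by
    rw [iterate_succ_apply', permInsert_apply_succAbove_of_ne j i' σ
      (iterate_ne_of_not_inCycleB σ hy t)]) t

theorem iterate_succ_permInsert_apply_self {s : ℕ} (hs : s < minimalPeriod σ i') :
    (permInsert j (j.succAbove i') σ)^[s + 1] j = j.succAbove (σ^[s + 1] i') := by
  induction s with
  | zero => exact permInsert_apply_left j i' σ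
  | succ s ih =>
    rw [iterate_succ_apply', ih (by omega), permInsert_apply_succAbove_of_ne j i' σ
      (not_isPeriodicPt_of_pos_of_lt_minimalPeriod s.succ_ne_zero hs), ← iterate_succ_apply' σ]

theorem iterate_minimalPeriod_permInsert_apply_self :
    (permInsert j (j.succAbove i') σ)^[minimalPeriod σ i'] j = j.succAbove i' := by
  obtain ⟨s, hs⟩ := Nat.exists_eq_add_one.2 (σ.minimalPeriod_pos i')
  rw [hs, iterate_succ_permInsert_apply_self j i' σ (by omega), ← hs, iterate_minimalPeriod]

theorem minimalPeriod_permInsert_self :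
    minimalPeriod (permInsert j (j.succAbove i') σ) j = minimalPeriod σ i' + 1 := by
  have hper : IsPeriodicPt (permInsert j (j.succAbove i') σ) (minimalPeriod σ i' + 1) j := by
    rw [IsPeriodicPt, IsFixedPt, iterate_succ_apply', iterate_minimalPeriod_permInsert_apply_self,
      permInsert_apply_right]
  refine le_antisymm (hper.minimalPeriod_le (by omega)) (Nat.not_lt.1 fun hlt => ?_)
  obtain ⟨s, hs⟩ := Nat.exists_eq_add_one.2 ((permInsert j (j.succAbove i') σ).minimalPeriod_pos j)
  have := iterate_minimalPeriod (f := permInsert j (j.succAbove i') σ) (x := j)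
  rw [hs, iterate_succ_permInsert_apply_self j i' σ (by omega)] at this
  exact Fin.succAbove_ne j _ this

theorem inCycleB_permInsert_self_succAbove (y : Fin m) :
    inCycleB (permInsert j (j.succAbove i') σ) j (j.succAbove y) = inCycleB σ i' y := by
  refine Bool.eq_iff_iff.2 ?_
  simp only [inCycleB_iff_exists_lt_minimalPeriod, minimalPeriod_permInsert_self]
  constructor
  · rintro ⟨s, hs, hsy⟩
    rcases Nat.lt_succ_iff_lt_or_eq.1 hs with hs | rfl
    · rw [iterate_succ_permInsert_apply_self j i' σ hs] at hsy
      exact ⟨s, hs, Fin.succAbove_right_injective hsy⟩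
    · rw [iterate_succ_apply', iterate_minimalPeriod_permInsert_apply_self,
        permInsert_apply_right] at hsy
      exact absurd hsy.symm (Fin.succAbove_ne j y)
  · rintro ⟨s, hs, rfl⟩
    exact ⟨s, by omega, iterate_succ_permInsert_apply_self j i' σ hs⟩

theorem leaders_permInsert :
    leaders (permInsert j (j.succAbove i') σ) j = (leaders σ i').map j.succAbove := by
  rw [leaders, leaders, filter_finRange_eq_map_succAbove j (by simp [inCycleB_self])]
  congr 1
  refine List.filter_congr fun y _ => ?_
  simp only [Function.comp_apply, inCycleB_permInsert_self_succAbove]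
  cases hy : inCycleB σ i' y
  · rw [isLeaderB_eq_of_iterate_apply (Fin.strictMono_succAbove j)
      (iterate_permInsert_apply_succAbove j i' σ (by simp [hy]))]
  · simp

theorem cycProd_permInsert_of_not_inCycleB {y : Fin m} (hy : ¬ inCycleB σ i' y) :
    cycProd A (permInsert j (j.succAbove i') σ) (j.succAbove y)
      = cycProd ((A.updateRow (j.succAbove i') fun t => A j t).submatrix
          j.succAbove j.succAbove) σ y :=
  cycProd_eq_of_iterate_apply Fin.succAbove_right_injective
    (iterate_permInsert_apply_succAbove j i' σ hy) fun t => by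
      rw [Matrix.submatrix_apply, Matrix.updateRow_ne
        (Fin.succAbove_right_injective.ne (iterate_ne_of_not_inCycleB σ hy t))]

theorem cycProd_permInsert_self :
    cycProd A (permInsert j (j.succAbove i') σ) j
      = cycProd ((A.updateRow (j.succAbove i') fun t => A j t).submatrix
          j.succAbove j.succAbove) σ i' * A (j.succAbove i') j := by
  rw [cycProd, cycProd, minimalPeriod_permInsert_self, List.range_succ, List.map_append,
    List.prod_append]
  congr 1
  · refine congrArg List.prod (List.map_congr_left fun t ht => ?_)
    have ht := List.mem_range.1 ht
    rw [iterate_succ_permInsert_apply_self j i' σ ht, Matrix.submatrix_apply]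
    cases t with
    | zero => rw [iterate_zero_apply, iterate_zero_apply, Matrix.updateRow_self]
    | succ s =>
      rw [iterate_succ_permInsert_apply_self j i' σ (by omega), Matrix.updateRow_ne
        (Fin.succAbove_right_injective.ne
          (not_isPeriodicPt_of_pos_of_lt_minimalPeriod s.succ_ne_zero ht))]
  · rw [List.map_singleton, List.prod_singleton, iterate_succ_apply',
      iterate_minimalPeriod_permInsert_apply_self, permInsert_apply_right]

theorem cdetTerm_permInsert :
    cdetTerm A j (permInsert j (j.succAbove i') σ)
      = -cdetTerm ((A.updateRow (j.succAbove i') fun t => A j t).submatrix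
          j.succAbove j.succAbove) i' σ * A (j.succAbove i') j := by
  have hsign : Perm.sign (permInsert j (j.succAbove i') σ) = -Perm.sign σ := by
    rw [permInsert, Perm.sign_mul, sign_permExtend, Perm.sign_swap (Fin.ne_succAbove j i')]
    simp
  have hcyc : (leaders σ i').reverse.map
        (cycProd A (permInsert j (j.succAbove i') σ) ∘ j.succAbove)
      = (leaders σ i').reverse.map
        (cycProd ((A.updateRow (j.succAbove i') fun t => A j t).submatrix
          j.succAbove j.succAbove) σ) :=
    List.map_congr_left fun y hy => cycProd_permInsert_of_not_inCycleB A j i' σ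
      (not_inCycleB_of_mem_leaders σ (List.mem_reverse.1 hy))
  rw [cdetTerm, cdetTerm, hsign, leaders_permInsert, ← List.map_reverse, List.map_map, hcyc,
    cycProd_permInsert_self]
  push_cast
  simp only [neg_mul, mul_assoc]

end OffDiagonal

theorem cdet_eq_sum_permInsert {m : ℕ} (A : Matrix (Fin (m + 1)) (Fin (m + 1)) ℍ[ℝ])
    (j : Fin (m + 1)) :
    cdet A j = ∑ i, ∑ σ : Perm (Fin m), cdetTerm A j (permInsert j i σ) := by
  rw [← Fintype.sum_prod_type' (f := fun i σ => cdetTerm A j (permInsert j i σ))]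
  exact (Fintype.sum_bijective _ (permInsert_bijective j) _ _ fun _ => rfl).symm

/-- `L i j` is the left cofactor `L_{ij}`, with `i ≠ j` written as `i = j.succAbove i'`; position
`0` of `A^{jj}` is the index `k = min ({1,…,n} \ {j})`. -/
theorem stmt5 {n : ℕ} (A : Matrix (Fin (n + 2)) (Fin (n + 2)) ℍ[ℝ])
    (L : Fin (n + 2) → Fin (n + 2) → ℍ[ℝ])
    (hLdiag : ∀ j : Fin (n + 2),
      L j j = cdet (A.submatrix j.succAbove j.succAbove) 0)
    (hLoff : ∀ (j : Fin (n + 2)) (i' : Fin (n + 1)),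
      L (j.succAbove i') j =
        - cdet ((A.updateRow (j.succAbove i') fun t => A j t).submatrix
            j.succAbove j.succAbove) i') :
    ∀ j, cdet A j = ∑ i, L i j * A i j := by
  intro j
  rw [cdet_eq_sum_permInsert]
  refine Finset.sum_congr rfl fun i _ => ?_
  rcases eq_or_ne i j with rfl | hij
  · simp_rw [permInsert_self, cdetTerm_permExtend, ← Finset.sum_mul, hLdiag]
    rfl
  · obtain ⟨i', rfl⟩ := Fin.exists_succAbove_eq hij
    simp_rw [cdetTerm_permInsert, ← Finset.sum_mul, Finset.sum_neg_distrib, hLoff]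
    rfl
end

section
/- Let A be an n×n Hermitian matrix over ℍ. Then for every real number t, det(tI − A) = t^n − d₁ t^{n−1} + d₂ t^{n−2} − ⋯ + (−1)^n d_n, where for 1 ≤ k ≤ n, d_k = Σ_{β∈J_{k,n}} |A_β^β| is the sum of all principal minors of A of order k (in particular d_n = det A). -/
open Quaternion Matrix Finset

/-!
Read every term of `rdet_1 (tI - A)` with the cycles of `σ` led by their smallest elements. A fixed
point `l` of `σ` contributes the factor `t - a_ll`, every other cycle the ordered product of the
entries of `-A` along it. As `t` is real, hence central in `ℍ`, multiplying out the fixed-point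
factors writes the term as a sum over the sets `β ⊇ supp σ` of `t^(n - |β|)` times the ordered
product of the cycles of `σ` inside `β`, which is the term of `σ|_β` in `det ((-A)_β^β)
= (-1)^|β| |A_β^β|`. Summing over `σ` and grouping the sets `β` by size gives the coefficients.
-/

open Equiv Function

namespace Equiv.Perm

variable {α : Type*} [Finite α] (σ : Perm α)

theorem minimalPeriod_pos_s10 (x : α) : 0 < minimalPeriod σ x :=
  minimalPeriod_pos_of_mem_periodicPts (σ.injective.mem_periodicPts x)

theorem sameCycle_iff_exists_iterate_lt {x y : α} :
    σ.SameCycle x y ↔ ∃ k < minimalPeriod σ x, σ^[k] x = y := by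
  constructor
  · intro h
    obtain ⟨k, rfl⟩ := h.exists_nat_pow_eq
    exact ⟨k % minimalPeriod σ x, Nat.mod_lt _ (σ.minimalPeriod_pos_s10 x),
      by rw [iterate_mod_minimalPeriod_eq, iterate_eq_pow]⟩
  · rintro ⟨k, -, rfl⟩
    exact ⟨k, by rw [zpow_natCast, iterate_eq_pow]⟩

theorem card_filter_sameCycle [Fintype α] [DecidableRel σ.SameCycle] (x : α) :
    #{y | σ.SameCycle x y} = minimalPeriod σ x := by
  classical
  have : ({y | σ.SameCycle x y} : Finset α) = (range (minimalPeriod σ x)).image (σ^[·] x) := by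
    ext y
    simp [sameCycle_iff_exists_iterate_lt]
  rw [this, card_image_of_injOn, card_range]
  exact fun a ha b hb => iterate_injOn_Iio_minimalPeriod (mem_range.mp ha) (mem_range.mp hb)

theorem minimalPeriod_le_card [Fintype α] (x : α) : minimalPeriod σ x ≤ Fintype.card α := by
  classical
  exact σ.card_filter_sameCycle x ▸ card_le_univ _

end Equiv.Perm

theorem List.prod_map_neg_one_pow_mul {M α : Type*} [Monoid M] [HasDistribNeg M] (L : List α)
    (k : α → ℕ) (f : α → M) :
    (L.map fun a => (-1) ^ k a * f a).prod = (-1) ^ (L.map k).sum * (L.map f).prod := by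
  induction L with
  | nil => simp
  | cons a L ih =>
    simp only [List.map_cons, List.prod_cons, List.sum_cons, ih, pow_add, mul_assoc,
      ((Commute.neg_one_right (f a)).pow_right _).left_comm]

theorem List.prod_map_add_eq_sum_powerset {R α : Type*} [Semiring R] [DecidableEq α]
    {u v : α → R} (huv : ∀ a b, Commute (u a) (v b)) :
    ∀ {L : List α}, L.Nodup →
      (L.map fun a => u a + v a).prod =
        ∑ s ∈ L.toFinset.powerset,
          ((L.filter (· ∉ s)).map u).prod * ((L.filter (· ∈ s)).map v).prod
  | [], _ => by simp
  | a :: L, hL => by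
    obtain ⟨ha, hL⟩ := List.nodup_cons.mp hL
    have haL : a ∉ L.toFinset := by simpa using ha
    have hmem : ∀ s : Finset α, ∀ x ∈ L, x ∈ insert a s ↔ x ∈ s := fun s x hx => by
      rw [mem_insert, or_iff_right (ne_of_mem_of_not_mem hx ha)]
    rw [List.map_cons, List.prod_cons, List.prod_map_add_eq_sum_powerset huv hL,
      List.toFinset_cons, sum_powerset_insert haL, add_mul, mul_sum, mul_sum]
    congr 1
    · refine sum_congr rfl fun s hs => ?_
      have has : a ∉ s := fun h => haL (mem_powerset.mp hs h)
      simp [has, mul_assoc]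
    · refine sum_congr rfl fun s _ => ?_
      have hv : Commute (v a) ((L.filter (· ∉ s)).map u).prod :=
        Commute.list_prod_right _ _ fun x hx => by
          obtain ⟨b, -, rfl⟩ := List.mem_map.mp hx
          exact (huv b a).symm
      have hout : L.filter (· ∉ insert a s) = L.filter (· ∉ s) :=
        List.filter_congr fun x hx => by simp only [hmem s x hx]
      have hin : L.filter (· ∈ insert a s) = L.filter (· ∈ s) :=
        List.filter_congr fun x hx => by simp only [hmem s x hx]
      rw [List.filter_cons_of_neg (by simp), List.filter_cons_of_pos (by simp), hout, hin,
        List.map_cons, List.prod_cons, ← mul_assoc, ← mul_assoc, hv.eq]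

section CycleLeaders

variable {n : ℕ} (σ : Perm (Fin n))

theorem inCycleB_eq_true {i x : Fin n} : inCycleB σ i x = true ↔ σ.SameCycle i x := by
  simp only [inCycleB, List.any_eq_true, List.mem_range, decide_eq_true_eq]
  constructor
  · rintro ⟨k, -, rfl⟩
    exact ⟨k, by rw [zpow_natCast, Perm.iterate_eq_pow]⟩
  · intro h
    obtain ⟨k, hk, rfl⟩ := (σ.sameCycle_iff_exists_iterate_lt).mp h
    exact ⟨k, hk.trans_le (by simpa using σ.minimalPeriod_le_card i), rfl⟩

theorem isLeaderB_eq_true_iff_forall_iterate {x : Fin n} :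
    isLeaderB σ x = true ↔ ∀ k, x ≤ σ^[k] x := by
  simp only [isLeaderB, List.all_eq_true, List.mem_range, decide_eq_true_eq]
  refine ⟨fun h k => ?_, fun h k _ => h k⟩
  rw [← iterate_mod_minimalPeriod_eq]
  exact h _ ((Nat.mod_lt _ (σ.minimalPeriod_pos_s10 x)).trans_le
    (by simpa using σ.minimalPeriod_le_card x))

theorem isLeaderB_eq_true {x : Fin n} :
    isLeaderB σ x = true ↔ ∀ y, σ.SameCycle x y → x ≤ y := by
  rw [isLeaderB_eq_true_iff_forall_iterate]
  refine ⟨fun h y hxy => ?_, fun h k => h _ ?_⟩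
  · obtain ⟨k, -, rfl⟩ := σ.sameCycle_iff_exists_iterate_lt.mp hxy
    exact h k
  · rw [Perm.iterate_eq_pow]
    exact Perm.sameCycle_pow_right.mpr .rfl

theorem isLeaderB_of_isFixedPt {x : Fin n} (hx : IsFixedPt σ x) : isLeaderB σ x = true :=
  (isLeaderB_eq_true σ).mpr fun _ hxy => (hxy.eq_of_left hx).le

theorem exists_isLeaderB_sameCycle (x : Fin n) :
    ∃ l, isLeaderB σ l = true ∧ σ.SameCycle l x := by
  classical
  set c : Finset (Fin n) := {y | σ.SameCycle x y}
  have hne : c.Nonempty := ⟨x, mem_filter.mpr ⟨mem_univ _, .rfl⟩⟩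
  have hmem : σ.SameCycle x (c.min' hne) := (mem_filter.mp (c.min'_mem hne)).2
  refine ⟨_, (isLeaderB_eq_true σ).mpr fun y hy => c.min'_le y ?_, hmem.symm⟩
  exact mem_filter.mpr ⟨mem_univ _, hmem.trans hy⟩

theorem eq_of_isLeaderB_of_sameCycle {l l' : Fin n} (hl : isLeaderB σ l = true)
    (hl' : isLeaderB σ l' = true) (h : σ.SameCycle l l') : l = l' :=
  le_antisymm ((isLeaderB_eq_true σ).mp hl _ h) ((isLeaderB_eq_true σ).mp hl' _ h.symm)

def cycleLeaders : List (Fin n) :=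
  (List.finRange n).filter (isLeaderB σ)

theorem mem_cycleLeaders {x : Fin n} : x ∈ cycleLeaders σ ↔ isLeaderB σ x = true := by
  simp [cycleLeaders]

theorem nodup_cycleLeaders : (cycleLeaders σ).Nodup :=
  (List.nodup_finRange n).filter _

theorem sum_minimalPeriod_cycleLeaders : ((cycleLeaders σ).map (minimalPeriod σ)).sum = n := by
  classical
  have hcover : (univ : Finset (Fin n)) =
      (cycleLeaders σ).toFinset.biUnion fun l => {y | σ.SameCycle l y} := by
    ext x
    obtain ⟨l, hl, hlx⟩ := exists_isLeaderB_sameCycle σ x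
    simpa [mem_cycleLeaders] using ⟨l, hl, hlx⟩
  rw [← List.sum_toFinset _ (nodup_cycleLeaders σ)]
  simp_rw [← σ.card_filter_sameCycle]
  rw [← card_biUnion, ← hcover, card_univ, Fintype.card_fin]
  intro l hl l' hl' hne
  simp only [List.coe_toFinset, Set.mem_ofPred_eq, mem_cycleLeaders] at hl hl'
  refine disjoint_left.mpr fun y hy hy' => hne ?_
  simp only [mem_filter, mem_univ, true_and] at hy hy'
  exact eq_of_isLeaderB_of_sameCycle σ hl hl' (hy.trans hy'.symm)

theorem cycleLeaders_eq_zero_cons {m : ℕ} (σ : Perm (Fin (m + 1))) :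
    cycleLeaders σ = 0 :: leaders σ 0 := by
  have h0 : isLeaderB σ 0 = true := (isLeaderB_eq_true σ).mpr fun y _ => Fin.zero_le y
  have hsucc : ∀ y : Fin m,
      isLeaderB σ y.succ = (isLeaderB σ y.succ && !inCycleB σ 0 y.succ) := by
    intro y
    cases hy : isLeaderB σ y.succ
    · rfl
    · have : ¬σ.SameCycle 0 y.succ := fun h =>
        Fin.succ_ne_zero y (eq_of_isLeaderB_of_sameCycle σ hy h0 h.symm)
      simp [Bool.eq_false_iff, inCycleB_eq_true, this]
  simp only [cycleLeaders, leaders, List.finRange_succ, List.filter_cons, h0,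
    (inCycleB_eq_true σ).mpr .rfl, List.filter_map]
  simp only [Bool.not_true, Bool.and_false, if_true, Bool.false_eq_true, if_false]
  exact congrArg _ (congrArg _ (List.filter_congr fun y _ => hsucc y))

/-- The row determinant with every cycle, the first one included, led by its smallest element.
Unlike `rdet A i` it singles out no index, so it restricts well to principal submatrices. -/
noncomputable def cycleDet {n : ℕ} (A : Matrix (Fin n) (Fin n) ℍ[ℝ]) : ℍ[ℝ] :=
  ∑ σ : Perm (Fin n), (Perm.sign σ : ℍ[ℝ]) * ((cycleLeaders σ).map (cycProd A σ)).prod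

theorem Hdet_eq_cycleDet : ∀ {m : ℕ} (A : Matrix (Fin m) (Fin m) ℍ[ℝ]), Hdet A = cycleDet A
  | 0, A => by simp [Hdet, cycleDet, cycleLeaders]
  | m + 1, A => by
    simp only [Hdet, rdet, cycleDet, cycleLeaders_eq_zero_cons, List.map_cons, List.prod_cons]

end CycleLeaders

section CycleProducts

variable {n : ℕ}

theorem cycProd_of_isFixedPt (B : Matrix (Fin n) (Fin n) ℍ[ℝ]) {σ : Perm (Fin n)} {x : Fin n}
    (hx : IsFixedPt σ x) : cycProd B σ x = B x x := by
  simp [cycProd, minimalPeriod_eq_one_iff_isFixedPt.mpr hx, hx.eq]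

theorem cycProd_neg (B : Matrix (Fin n) (Fin n) ℍ[ℝ]) (σ : Perm (Fin n)) (x : Fin n) :
    cycProd (-B) σ x = (-1) ^ minimalPeriod σ x * cycProd B σ x := by
  have h := List.prod_map_neg
    ((List.range (minimalPeriod σ x)).map fun k => B (σ^[k] x) (σ^[k + 1] x))
  rw [List.map_map, List.length_map, List.length_range] at h
  exact h

theorem cycleDet_neg {m : ℕ} (C : Matrix (Fin m) (Fin m) ℍ[ℝ]) :
    cycleDet (-C) = (-1) ^ m * cycleDet C := by
  simp only [cycleDet, Finset.mul_sum]
  refine Finset.sum_congr rfl fun σ _ => ?_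
  rw [funext (cycProd_neg C σ), List.prod_map_neg_one_pow_mul, sum_minimalPeriod_cycleLeaders,
    ← mul_assoc, ← mul_assoc, ((Commute.neg_one_left _).pow_left m).eq]

theorem cycProd_smul_one_sub (t : ℝ) (A : Matrix (Fin n) (Fin n) ℍ[ℝ]) (σ : Perm (Fin n))
    (x : Fin n) :
    cycProd ((t : ℍ[ℝ]) • 1 - A) σ x =
      (if σ x = x then (t : ℍ[ℝ]) else 0) + cycProd (-A) σ x := by
  by_cases hx : σ x = x
  · simp [cycProd_of_isFixedPt _ hx, hx, sub_eq_add_neg]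
  · rw [if_neg hx, zero_add]
    refine congrArg List.prod (List.map_congr_left fun k _ => ?_)
    have hne : σ^[k] x ≠ σ^[k + 1] x := by
      rw [iterate_succ_apply]
      exact fun h => hx ((σ.injective.iterate k) h).symm
    rw [Matrix.sub_apply, Matrix.smul_apply, Matrix.one_apply_ne hne, smul_zero, zero_sub,
      Matrix.neg_apply]

end CycleProducts

section Expansion

variable {n : ℕ} (σ : Perm (Fin n))

theorem length_filter_cycleLeaders_notMem {s : Finset (Fin n)}
    (hs : ∀ l ∈ cycleLeaders σ, σ l ≠ l → l ∈ s) :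
    ((cycleLeaders σ).filter (· ∉ s)).length = n - #(s ∪ σ.support) := by
  classical
  have hto : ((cycleLeaders σ).filter (· ∉ s)).toFinset = (s ∪ σ.support)ᶜ := by
    ext x
    simp only [List.toFinset_filter, mem_filter, List.mem_toFinset, mem_cycleLeaders,
      decide_eq_true_eq, mem_compl, mem_union, Perm.mem_support, not_or, not_not]
    constructor
    · rintro ⟨hx, hxs⟩
      exact ⟨hxs, not_not.mp fun h => hxs (hs x ((mem_cycleLeaders σ).mpr hx) h)⟩
    · rintro ⟨hxs, hx⟩
      exact ⟨isLeaderB_of_isFixedPt σ hx, hxs⟩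
  rw [← List.toFinset_card_of_nodup ((nodup_cycleLeaders σ).filter _), hto, card_compl,
    Fintype.card_fin]

theorem prod_map_ite_filter_cycleLeaders_notMem (t : ℝ) {s : Finset (Fin n)}
    (hs : ∀ l ∈ cycleLeaders σ, σ l ≠ l → l ∈ s) :
    (((cycleLeaders σ).filter (· ∉ s)).map fun l =>
        if σ l = l then (t : ℍ[ℝ]) else 0).prod =
      (t : ℍ[ℝ]) ^ (n - #(s ∪ σ.support)) := by
  rw [List.map_congr_left (g := fun _ => (t : ℍ[ℝ])), List.map_const', List.prod_replicate,
    length_filter_cycleLeaders_notMem σ hs]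
  intro l hl
  obtain ⟨hlL, hls⟩ := List.mem_filter.mp hl
  have : σ l = l := not_not.mp fun h => by simp [hs l hlL h] at hls
  simp [this]

theorem filter_cycleLeaders_mem_union_support {s : Finset (Fin n)}
    (hs : ∀ l ∈ cycleLeaders σ, σ l ≠ l → l ∈ s) :
    (cycleLeaders σ).filter (· ∈ s ∪ σ.support) = (cycleLeaders σ).filter (· ∈ s) :=
  List.filter_congr fun l hl => by
    simpa using fun h : l ∈ σ.support => hs l hl (Perm.mem_support.mp h)

theorem filter_isLeaderB_of_union_support {s : Finset (Fin n)}
    (hsL : s ⊆ (cycleLeaders σ).toFinset)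
    (hs : ∀ l ∈ cycleLeaders σ, σ l ≠ l → l ∈ s) :
    (s ∪ σ.support).filter (isLeaderB σ ·) = s := by
  ext x
  simp only [mem_filter, mem_union, Perm.mem_support]
  constructor
  · rintro ⟨hxs | hx, hl⟩
    · exact hxs
    · exact hs x ((mem_cycleLeaders σ).mpr hl) hx
  · intro hxs
    exact ⟨.inl hxs, by simpa [mem_cycleLeaders] using hsL hxs⟩

theorem filter_isLeaderB_union_support {β : Finset (Fin n)}
    (hβ : σ.support ⊆ β) : β.filter (isLeaderB σ ·) ∪ σ.support = β := by
  ext x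
  simp only [mem_union, mem_filter, Perm.mem_support]
  by_cases hx : σ x = x
  · simp [hx, isLeaderB_of_isFixedPt σ hx]
  · simp [hx, hβ (Perm.mem_support.mpr hx)]

theorem prod_cycProd_smul_one_sub (t : ℝ) (A : Matrix (Fin n) (Fin n) ℍ[ℝ]) :
    ((cycleLeaders σ).map (cycProd ((t : ℍ[ℝ]) • 1 - A) σ)).prod =
      ∑ β ∈ ({β | σ.support ⊆ β} : Finset (Finset (Fin n))),
        (t : ℍ[ℝ]) ^ (n - #β) *
          (((cycleLeaders σ).filter (· ∈ β)).map (cycProd (-A) σ)).prod := by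
  classical
  set L := cycleLeaders σ
  set u : Fin n → ℍ[ℝ] := fun l => if σ l = l then (t : ℍ[ℝ]) else 0
  have huv : ∀ a b, Commute (u a) (cycProd (-A) σ b) := fun a b => by
    by_cases ha : σ a = a
    · simpa [u, ha] using Quaternion.coe_commute t _
    · simp [u, ha]
  have hu : ∀ s : Finset (Fin n), ((L.filter (· ∉ s)).map u).prod ≠ 0 →
      ∀ l ∈ L, σ l ≠ l → l ∈ s := fun s hprod l hl hσl => by
    by_contra hls
    exact hprod (List.prod_eq_zero (List.mem_map.mpr ⟨l, by simp [hl, hls], by simp [u, hσl]⟩))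
  rw [funext (cycProd_smul_one_sub t A σ),
    List.prod_map_add_eq_sum_powerset huv (nodup_cycleLeaders σ),
    ← sum_filter_of_ne fun s _ h => hu s (left_ne_zero_of_mul h)]
  -- the surviving choices `s` of leaders correspond to the sets `β = s ∪ σ.support`
  refine sum_nbij' (· ∪ σ.support) (·.filter (isLeaderB σ ·)) ?_ ?_ ?_ ?_ ?_
  · intro s _
    simp
  · intro β hβ
    simp only [mem_filter, mem_univ, true_and, mem_powerset] at hβ ⊢
    refine ⟨fun x hx => ?_, fun l hlL hl => ?_⟩
    · simpa [L, mem_cycleLeaders] using (mem_filter.mp hx).2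
    · simp [hβ (Perm.mem_support.mpr hl), (mem_cycleLeaders σ).mp hlL]
  · intro s hs
    simp only [mem_filter, mem_powerset] at hs
    exact filter_isLeaderB_of_union_support σ hs.1 hs.2
  · intro β hβ
    exact filter_isLeaderB_union_support σ (by simpa using hβ)
  · intro s hs
    simp only [mem_filter, mem_powerset] at hs
    rw [prod_map_ite_filter_cycleLeaders_notMem σ t hs.2,
      filter_cycleLeaders_mem_union_support σ hs.2]

end Expansion

section PrincipalSubmatrix

variable {n : ℕ} (β : Finset (Fin n))

noncomputable def liftPerm (τ : Perm (Fin #β)) : Perm (Fin n) :=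
  τ.extendDomain (β.orderIsoOfFin rfl).toEquiv

variable {β}

theorem liftPerm_orderEmbOfFin (τ : Perm (Fin #β)) (x : Fin #β) :
    liftPerm β τ (β.orderEmbOfFin rfl x) = β.orderEmbOfFin rfl (τ x) := by
  simpa [liftPerm, β.coe_orderIsoOfFin_apply] using
    τ.extendDomain_apply_image (β.orderIsoOfFin rfl).toEquiv x

theorem liftPerm_iterate_orderEmbOfFin (τ : Perm (Fin #β)) (k : ℕ) (x : Fin #β) :
    (liftPerm β τ)^[k] (β.orderEmbOfFin rfl x) = β.orderEmbOfFin rfl (τ^[k] x) :=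
  (Semiconj.iterate_right (fun x => (liftPerm_orderEmbOfFin τ x).symm) k x).symm

theorem liftPerm_of_notMem (τ : Perm (Fin #β)) {y : Fin n} (hy : y ∉ β) :
    liftPerm β τ y = y :=
  τ.extendDomain_apply_not_subtype _ hy

theorem support_liftPerm_subset (τ : Perm (Fin #β)) : (liftPerm β τ).support ⊆ β :=
  fun _ hy => not_not.mp fun h => Perm.mem_support.mp hy (liftPerm_of_notMem τ h)

theorem liftPerm_injective : Injective (liftPerm β) :=
  Perm.extendDomainHom_injective _

theorem exists_liftPerm_eq {σ : Perm (Fin n)} (hσ : σ.support ⊆ β) :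
    ∃ τ, liftPerm β τ = σ := by
  have hβ : ∀ x, σ x ∈ β ↔ x ∈ β := fun x => by
    by_cases hx : σ x = x
    · rw [hx]
    · exact iff_of_true (hσ (Perm.apply_mem_support.mpr (Perm.mem_support.mpr hx)))
        (hσ (Perm.mem_support.mpr hx))
  refine ⟨(β.orderIsoOfFin rfl).toEquiv.symm.permCongr (σ.subtypePerm hβ),
    Equiv.ext fun y => ?_⟩
  by_cases hy : y ∈ β
  · simp [liftPerm, Perm.extendDomain_apply_subtype _ _ hy]
  · rw [liftPerm_of_notMem _ hy]
    exact (not_not.mp fun h => hy (hσ (Perm.mem_support.mpr h))).symm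

theorem minimalPeriod_liftPerm (τ : Perm (Fin #β)) (x : Fin #β) :
    minimalPeriod (liftPerm β τ) (β.orderEmbOfFin rfl x) = minimalPeriod τ x :=
  minimalPeriod_eq_minimalPeriod_iff.mpr fun k => by
    simp only [IsPeriodicPt, IsFixedPt, liftPerm_iterate_orderEmbOfFin,
      EmbeddingLike.apply_eq_iff_eq]

theorem cycProd_liftPerm (B : Matrix (Fin n) (Fin n) ℍ[ℝ]) (τ : Perm (Fin #β)) (x : Fin #β) :
    cycProd B (liftPerm β τ) (β.orderEmbOfFin rfl x) = cycProd (principalSub B β) τ x := by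
  simp only [cycProd, minimalPeriod_liftPerm, liftPerm_iterate_orderEmbOfFin, principalSub,
    Matrix.submatrix_apply]

theorem isLeaderB_liftPerm (τ : Perm (Fin #β)) (x : Fin #β) :
    isLeaderB (liftPerm β τ) (β.orderEmbOfFin rfl x) = isLeaderB τ x := by
  apply Bool.eq_iff_iff.mpr
  simp only [isLeaderB_eq_true_iff_forall_iterate, liftPerm_iterate_orderEmbOfFin,
    OrderEmbedding.le_iff_le]

theorem filter_cycleLeaders_liftPerm (τ : Perm (Fin #β)) :
    (cycleLeaders (liftPerm β τ)).filter (· ∈ β) =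
      (cycleLeaders τ).map (β.orderEmbOfFin rfl) := by
  refine List.Pairwise.eq_of_mem_iff (r := (· < ·)) ?_ ?_ fun y => ?_
  · exact ((List.pairwise_lt_finRange n).filter _).filter _
  · exact ((List.pairwise_lt_finRange _).filter _).map _ fun _ _ h => by simpa using h
  · simp only [List.mem_filter, mem_cycleLeaders, List.mem_map, decide_eq_true_eq]
    constructor
    · rintro ⟨hy, hyβ⟩
      obtain ⟨x, rfl⟩ : y ∈ Set.range (β.orderEmbOfFin rfl) := by
        rwa [range_orderEmbOfFin]
      exact ⟨x, by rwa [← isLeaderB_liftPerm], rfl⟩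
    · rintro ⟨x, hx, rfl⟩
      exact ⟨by rwa [isLeaderB_liftPerm], orderEmbOfFin_mem _ _ _⟩

theorem sum_support_subset_eq_cycleDet (B : Matrix (Fin n) (Fin n) ℍ[ℝ]) :
    ∑ σ ∈ ({σ | σ.support ⊆ β} : Finset (Perm (Fin n))),
        (Perm.sign σ : ℍ[ℝ]) *
          (((cycleLeaders σ).filter (· ∈ β)).map (cycProd B σ)).prod =
      cycleDet (principalSub B β) := by
  symm
  refine sum_bij (fun τ _ => liftPerm β τ)
    (fun τ _ => by simpa using support_liftPerm_subset τ)
    (fun τ _ τ' _ h => liftPerm_injective h) (fun σ hσ => ?_) (fun τ _ => ?_)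
  · obtain ⟨τ, rfl⟩ := exists_liftPerm_eq (by simpa using hσ)
    exact ⟨τ, mem_univ _, rfl⟩
  · rw [liftPerm, Perm.sign_extendDomain, ← liftPerm, filter_cycleLeaders_liftPerm, List.map_map]
    congr 2
    exact List.map_congr_left fun x _ => (cycProd_liftPerm B τ x).symm

end PrincipalSubmatrix

theorem cycleDet_smul_one_sub {n : ℕ} (t : ℝ) (A : Matrix (Fin n) (Fin n) ℍ[ℝ]) :
    cycleDet ((t : ℍ[ℝ]) • 1 - A) =
      ∑ β : Finset (Fin n), (t : ℍ[ℝ]) ^ (n - #β) * cycleDet (principalSub (-A) β) := by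
  simp_rw [← sum_support_subset_eq_cycleDet, mul_sum]
  rw [← sum_comm' (s := univ) (t := fun σ => {β | σ.support ⊆ β}) (by simp)]
  simp only [cycleDet, prod_cycProd_smul_one_sub, mul_sum]
  refine sum_congr rfl fun σ _ => sum_congr rfl fun β _ => ?_
  rw [← mul_assoc, ← mul_assoc, ((Quaternion.coe_commute t _).pow_left _).eq]

theorem Hdet_smul_one_sub {n : ℕ} (t : ℝ) (A : Matrix (Fin n) (Fin n) ℍ[ℝ]) :
    Hdet ((t : ℍ[ℝ]) • 1 - A) =
      ∑ β : Finset (Fin n),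
        (-1) ^ #β * Hdet (principalSub A β) * (t : ℍ[ℝ]) ^ (n - #β) := by
  rw [Hdet_eq_cycleDet, cycleDet_smul_one_sub]
  refine sum_congr rfl fun β _ => ?_
  rw [show principalSub (-A) β = -principalSub A β from rfl, cycleDet_neg, Hdet_eq_cycleDet,
    ((Quaternion.coe_commute t _).pow_left _).eq]

theorem sum_powersetCard_eq_minorSum {n : ℕ} (A : Matrix (Fin n) (Fin n) ℍ[ℝ]) (c : ℍ[ℝ])
    (k : ℕ) :
    ∑ β ∈ powersetCard k (univ : Finset (Fin n)),
        (-1) ^ #β * Hdet (principalSub A β) * c ^ (n - #β) =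
      (-1) ^ k * minorSum A k * c ^ (n - k) := by
  rw [minorSum, mul_sum, sum_mul]
  exact sum_congr rfl fun β hβ => by rw [← (mem_powersetCard.mp hβ).2]

theorem minorSum_zero {n : ℕ} (A : Matrix (Fin n) (Fin n) ℍ[ℝ]) : minorSum A 0 = 1 := by
  rw [minorSum, powersetCard_zero, sum_singleton]
  rfl

theorem stmt10_general {n : ℕ} (A : Matrix (Fin n) (Fin n) ℍ[ℝ])
    (t : ℝ) :
    Hdet ((t : ℍ[ℝ]) • (1 : Matrix (Fin n) (Fin n) ℍ[ℝ]) - A) =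
      (t : ℍ[ℝ]) ^ n +
        ∑ k ∈ Finset.Icc 1 n, (-1 : ℍ[ℝ]) ^ k * minorSum A k * (t : ℍ[ℝ]) ^ (n - k) := by
  rw [Hdet_smul_one_sub, ← powerset_univ, sum_powerset, card_univ, Fintype.card_fin,
    range_eq_Ico, sum_eq_sum_Ico_succ_bot n.succ_pos, zero_add, Nat.succ_eq_add_one,
    Ico_add_one_right_eq_Icc]
  simp only [sum_powersetCard_eq_minorSum, minorSum_zero, pow_zero, one_mul, Nat.sub_zero]

/-- the characteristic polynomial of a Hermitian quaternion
matrix: `det (tI − A) = tⁿ − d₁ t^{n−1} + ⋯ + (−1)ⁿ dₙ`, where `d_k` is the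
sum of all principal minors of `A` of order `k`. -/
theorem stmt10 {n : ℕ} (A : Matrix (Fin n) (Fin n) ℍ[ℝ]) (hA : A.IsHermitian)
    (t : ℝ) :
    Hdet ((t : ℍ[ℝ]) • (1 : Matrix (Fin n) (Fin n) ℍ[ℝ]) - A) =
      (t : ℍ[ℝ]) ^ n +
        ∑ k ∈ Finset.Icc 1 n, (-1 : ℍ[ℝ]) ^ k * minorSum A k * (t : ℍ[ℝ]) ^ (n - k) :=
  stmt10_general A t
end
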